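/- arXiv:1512.03326 — 2 statements merged into one kernel-verified Lean document; each statement's English description precedes it below -/
import Mathlib

section
/- (Main Theorem) Let $E$ be a real inner product space, fix $o \in E$ and $R \geq 0$, and let $z \in E$ be a point on the sphere of center $o$ and radius $R$ (i.e. $\|z - o\| = R$). Let $\{\alpha_i, a_i\}$ be a finite weighted family of points on this sphere with real weights summing to $1$, all equidistant from $z$ (i.e. $\|z - a_i\| = \|z - a_k\|$ for all $i, k$), with barycenter $g = \sum_i \alpha_i a_i$. Then for any other finite weighted family $\{\beta_j, b_j\}$ of points on the same sphere, with real weights summing to $1$ and the same barycenter $\sum_j \beta_j b_j = g$, and for every index $l$ of the first family, one has $\sum_j \beta_j \|z - b_j\|^2 = \|z - a_l\|^2$. -/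
open scoped RealInnerProductSpace

theorem entanglement_decomposition_invariance {E : Type*} [NormedAddCommGroup E]
    [InnerProductSpace ℝ E] (o : E) (R : ℝ) (hR : 0 ≤ R)
    (z : E) (hz : ‖z - o‖ = R)
    {n m : ℕ} (a : Fin n → E) (α : Fin n → ℝ) (b : Fin m → E) (β : Fin m → ℝ)
    (hα : ∑ i, α i = 1) (hβ : ∑ j, β j = 1)
    (ha : ∀ i, ‖a i - o‖ = R) (hb : ∀ j, ‖b j - o‖ = R)
    (hequi : ∀ i k, ‖z - a i‖ = ‖z - a k‖)
    (g : E) (hga : g = ∑ i, α i • a i) (hgb : ∑ j, β j • b j = g)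
    (l : Fin n) :
    ∑ j, β j * ‖z - b j‖ ^ 2 = ‖z - a l‖ ^ 2 := by
  have key : ∀ x : E, ‖x - o‖ = R → ‖z - x‖ ^ 2 = 2 * R ^ 2 - 2 * ⟪z - o, x - o⟫ := by
    intro x hx
    have h1 : z - x = (z - o) - (x - o) := by abel
    rw [h1, norm_sub_sq_real, hz, hx]; ring
  have hwsum : ∀ {k : ℕ} (c : Fin k → E) (γ : Fin k → ℝ), (∑ j, γ j = 1) →
      (∀ j, ‖c j - o‖ = R) → (∑ j, γ j • c j = g) →
      ∑ j, γ j * ‖z - c j‖ ^ 2 = 2 * R ^ 2 - 2 * ⟪z - o, g - o⟫ := by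
    intro k c γ hγ hc hgc
    have hinner : ∑ j, γ j * ⟪z - o, c j - o⟫ = ⟪z - o, g - o⟫ := by
      have : ∑ j, γ j • (c j - o) = g - o := by
        simp only [smul_sub]
        rw [Finset.sum_sub_distrib, ← Finset.sum_smul, hγ, one_smul, hgc]
      calc ∑ j, γ j * ⟪z - o, c j - o⟫ = ⟪z - o, ∑ j, γ j • (c j - o)⟫ := by
            rw [inner_sum]; simp [real_inner_smul_right]
        _ = ⟪z - o, g - o⟫ := by rw [this]
    calc ∑ j, γ j * ‖z - c j‖ ^ 2
        = ∑ j, (γ j * (2 * R ^ 2) - 2 * (γ j * ⟪z - o, c j - o⟫)) := by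
          apply Finset.sum_congr rfl; intro j _; rw [key (c j) (hc j)]; ring
      _ = (∑ j, γ j) * (2 * R ^ 2) - 2 * ∑ j, γ j * ⟪z - o, c j - o⟫ := by
          rw [Finset.sum_sub_distrib, ← Finset.sum_mul, Finset.mul_sum]
      _ = 2 * R ^ 2 - 2 * ⟪z - o, g - o⟫ := by rw [hγ, hinner, one_mul]
  have hb' := hwsum b β hβ hb hgb
  have ha' := hwsum a α hα ha hga.symm
  have haconst : ∑ i, α i * ‖z - a i‖ ^ 2 = ‖z - a l‖ ^ 2 := by
    calc ∑ i, α i * ‖z - a i‖ ^ 2 = ∑ i, α i * ‖z - a l‖ ^ 2 := by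
          apply Finset.sum_congr rfl; intro i _; rw [hequi i l]
      _ = ‖z - a l‖ ^ 2 := by rw [← Finset.sum_mul, hα, one_mul]
  rw [hb', ← ha', haconst]
end

section
/- Let $E$ be a real inner product space, fix $o \in E$ and $R > 0$, let $z \in E$ satisfy $\|z - o\| = R$, and let $z' = 2o - z$. For any finite weighted family $\{\alpha_i, a_i\}$ of points on the sphere of center $o$ and radius $R$, with real weights summing to $1$ and barycenter $g = \sum_i \alpha_i a_i$, let $c = z + \frac{\langle g - z, z' - z\rangle}{\|z' - z\|^2}(z' - z)$ be the orthogonal projection of $g$ onto the line through $z$ and $z'$. Then $\sum_i \alpha_i \|z - a_i\|^2 = 2R\,\frac{\langle z - o, z - g\rangle}{R} = \|z' - z\| \cdot \frac{\langle z' - z, g - z\rangle}{\|z' - z\|}$; in particular, if $\langle z' - z, g - z \rangle \geq 0$ then $\sum_i \alpha_i \|z - a_i\|^2 = \|z' - z\| \cdot \|c - z\|$. -/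
open scoped RealInnerProductSpace

theorem mean_sq_dist_eq_diameter_mul_proj_dist {E : Type*} [NormedAddCommGroup E]
    [InnerProductSpace ℝ E] (o : E) (R : ℝ) (hR : 0 < R)
    (z : E) (hz : ‖z - o‖ = R) (z' : E) (hz' : z' = (2 : ℝ) • o - z)
    {n : ℕ} (a : Fin n → E) (α : Fin n → ℝ) (hα : ∑ i, α i = 1)
    (ha : ∀ i, ‖a i - o‖ = R)
    (g : E) (hg : g = ∑ i, α i • a i)
    (c : E) (hc : c = z + (⟪g - z, z' - z⟫ / ‖z' - z‖ ^ 2) • (z' - z)) :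
    ∑ i, α i * ‖z - a i‖ ^ 2 = 2 * R * (⟪z - o, z - g⟫ / R) ∧
      ∑ i, α i * ‖z - a i‖ ^ 2 = ‖z' - z‖ * (⟪z' - z, g - z⟫ / ‖z' - z‖) ∧
      (0 ≤ ⟪z' - z, g - z⟫ →
        ∑ i, α i * ‖z - a i‖ ^ 2 = ‖z' - z‖ * ‖c - z‖) := by
  have hRne : R ≠ 0 := ne_of_gt hR
  have hgo : g - o = ∑ i, α i • (a i - o) := by
    rw [hg]
    rw [Finset.sum_congr rfl (fun i _ => smul_sub (α i) (a i) o)]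
    rw [Finset.sum_sub_distrib, ← Finset.sum_smul, hα, one_smul]
  have hinner : ⟪z - o, g - o⟫ = ∑ i, α i * ⟪z - o, a i - o⟫ := by
    rw [hgo, inner_sum]
    exact Finset.sum_congr rfl fun i _ => real_inner_smul_right _ _ _
  have key : ∑ i, α i * ‖z - a i‖ ^ 2 = 2 * ⟪z - o, z - g⟫ := by
    have h1 : ∀ i, ‖z - a i‖ ^ 2 = 2 * R ^ 2 - 2 * ⟪z - o, a i - o⟫ := by
      intro i
      have h2 : z - a i = (z - o) - (a i - o) := by abel
      rw [h2, ← real_inner_self_eq_norm_sq, inner_sub_sub_self,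
        real_inner_self_eq_norm_sq, real_inner_self_eq_norm_sq, hz, ha i,
        real_inner_comm]
      ring
    have h3 : z - g = (z - o) - (g - o) := by abel
    calc ∑ i, α i * ‖z - a i‖ ^ 2
        = ∑ i, (α i * (2 * R ^ 2) - 2 * (α i * ⟪z - o, a i - o⟫)) := by
          refine Finset.sum_congr rfl fun i _ => ?_
          rw [h1 i]; ring
      _ = (∑ i, α i) * (2 * R ^ 2) - 2 * ∑ i, α i * ⟪z - o, a i - o⟫ := by
          rw [Finset.sum_sub_distrib, ← Finset.sum_mul, Finset.mul_sum]
      _ = 2 * R ^ 2 - 2 * ⟪z - o, g - o⟫ := by rw [hα, hinner]; ring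
      _ = 2 * ⟪z - o, z - g⟫ := by
          have h4 : ⟪z - o, z - g⟫ = R ^ 2 - ⟪z - o, g - o⟫ := by
            rw [h3, inner_sub_right, real_inner_self_eq_norm_sq, hz]
          rw [h4]; ring
  have hzz : z' - z = (2 : ℝ) • (o - z) := by rw [hz']; module
  have hnorm : ‖z' - z‖ = 2 * R := by
    rw [hzz, norm_smul, norm_sub_rev o z, hz]
    simp
  have hin2 : ⟪z' - z, g - z⟫ = 2 * ⟪z - o, z - g⟫ := by
    rw [hzz, real_inner_smul_left]
    have : (⟪o - z, g - z⟫ : ℝ) = ⟪z - o, z - g⟫ := by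
      rw [show o - z = -(z - o) by abel, show g - z = -(z - g) by abel,
        inner_neg_neg]
    rw [this]
  have hne2 : ‖z' - z‖ ≠ 0 := by rw [hnorm]; positivity
  refine ⟨?_, ?_, ?_⟩
  · rw [key]; field_simp
  · rw [key, hin2]; field_simp
  · intro hpos
    have hpos' : (0:ℝ) ≤ ⟪g - z, z' - z⟫ := by rwa [real_inner_comm]
    have hcz : ‖c - z‖ = ⟪g - z, z' - z⟫ / ‖z' - z‖ := by
      rw [hc]
      have h5 : z + (⟪g - z, z' - z⟫ / ‖z' - z‖ ^ 2) • (z' - z) - z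
          = (⟪g - z, z' - z⟫ / ‖z' - z‖ ^ 2) • (z' - z) := by abel
      rw [h5, norm_smul, Real.norm_eq_abs,
        abs_of_nonneg (div_nonneg hpos' (by positivity)), pow_two]
      field_simp
    have hin2' : (⟪g - z, z' - z⟫ : ℝ) = 2 * ⟪z - o, z - g⟫ :=
      (real_inner_comm _ _).trans hin2
    rw [key, hcz, hin2']
    field_simp
end
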